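/- For the DFA baba (states {A, B, C, D, F} with transitions A→A on a, A→B on b, B→C on a, B→B on b, C→A on a, C→D on b, D→F on a, D→B on b, F self-loops; start A, final F), after consuming any word w: the machine is in state F iff [b,a,b,a] is an infix of w; in state D iff w ends in [b,a,b] and [b,a,b,a] is not an infix of w; in state C iff w ends in [b,a] but not in [b,a,b], and [b,a,b,a] is not an infix of w; in state B iff w ends in [b] but not in [b,a] or [b,a,b], and [b,a,b,a] is not an infix of w; in state A iff w does not end in b, does not end in [b,a], does not end in [b,a,b], and [b,a,b,a] is not an infix of w. -/
import Mathlib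


inductive Letter | a | b
deriving DecidableEq

inductive St | A | B | C | D | F
deriving DecidableEq

open Letter St in
def step : St → Letter → St
  | A, a => A
  | A, b => B
  | B, a => C
  | B, b => B
  | C, a => A
  | C, b => D
  | D, a => F
  | D, b => B
  | F, _ => F

def run (q : St) (w : List Letter) : St := w.foldl step q

lemma suf_concat {α} (l : List α) (c x : α) (w : List α) :
    l ++ [c] <:+ w ++ [x] ↔ c = x ∧ l <:+ w := by
  constructor
  · rintro ⟨t, ht⟩
    rw [← List.append_assoc] at ht
    obtain ⟨h1, h2⟩ := List.append_inj' ht rfl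
    simp at h2
    exact ⟨h2, t, h1⟩
  · rintro ⟨rfl, t, rfl⟩
    exact ⟨t, by simp⟩

lemma inf_concat {α} (s : List α) (w : List α) (x : α) :
    s <:+: w ++ [x] ↔ s <:+: w ∨ s <:+ w ++ [x] := by
  constructor
  · rintro ⟨pre, post, h⟩
    rcases List.eq_nil_or_concat post with rfl | ⟨post', x', rfl⟩
    · right; exact ⟨pre, by simpa using h⟩
    · left
      rw [List.concat_eq_append, show pre ++ s ++ (post' ++ [x']) = (pre ++ s ++ post') ++ [x'] by simp] at h
      obtain ⟨h1, _⟩ := List.append_inj' h rfl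
      exact ⟨pre, post', h1⟩
  · rintro (h | h)
    · exact h.trans ((List.prefix_append w [x]).isInfix)
    · exact h.isInfix

open Letter in
lemma nb {w : List Letter} (h : [b, a] <:+ w) : ¬ [b] <:+ w := fun h2 => by
  rcases List.suffix_or_suffix_of_suffix h h2 with h3 | h3 <;> revert h3 <;> decide

open Letter in
lemma nba {w : List Letter} (h : [b, a, b] <:+ w) : ¬ [b, a] <:+ w := fun h2 => by
  rcases List.suffix_or_suffix_of_suffix h h2 with h3 | h3 <;> revert h3 <;> decide

open Letter in
theorem stmt7 (w : List Letter) :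
    (run St.A w = St.F ↔ [b, a, b, a] <:+: w) ∧
    (run St.A w = St.D ↔ [b, a, b] <:+ w ∧ ¬ [b, a, b, a] <:+: w) ∧
    (run St.A w = St.C ↔ [b, a] <:+ w ∧ ¬ [b, a, b] <:+ w ∧ ¬ [b, a, b, a] <:+: w) ∧
    (run St.A w = St.B ↔ [b] <:+ w ∧ ¬ [b, a] <:+ w ∧ ¬ [b, a, b] <:+ w ∧
        ¬ [b, a, b, a] <:+: w) ∧
    (run St.A w = St.A ↔ ¬ [b] <:+ w ∧ ¬ [b, a] <:+ w ∧ ¬ [b, a, b] <:+ w ∧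
        ¬ [b, a, b, a] <:+: w) := by
  induction w using List.reverseRecOn with
  | nil =>
    simp [run]
  | append_singleton w x ih =>
    have hrun : run St.A (w ++ [x]) = step (run St.A w) x := by
      simp [run, List.foldl_append]
    have h1 : [b] <:+ w ++ [x] ↔ b = x := by
      simpa using suf_concat [] b x w
    have h2 : [b, a] <:+ w ++ [x] ↔ a = x ∧ [b] <:+ w :=
      suf_concat [b] a x w
    have h3 : [b, a, b] <:+ w ++ [x] ↔ b = x ∧ [b, a] <:+ w :=
      suf_concat [b, a] b x w
    have h4 : [b, a, b, a] <:+ w ++ [x] ↔ a = x ∧ [b, a, b] <:+ w :=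
      suf_concat [b, a, b] a x w
    have h5 := inf_concat [b, a, b, a] w x
    rw [hrun]
    obtain ⟨i1, i2, i3, i4, i5⟩ := ih
    rw [h1, h2, h3, h5, h4]
    have n1 := @nb w
    have n2 := @nba w
    rcases hq : run St.A w with _ | _ | _ | _ | _ <;>
      rw [hq] at i1 i2 i3 i4 i5 <;>
      cases x <;>
      simp_all [step]
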